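/- The Euler characteristic density of order 1 for the noncentral χ²₂(λ) random field is ρ₁(λ, x) = e^{−(λ+x)/2}·√(x/(2π))·I₀(√(λx)) for all λ ≥ 0 and x > 0. -/

import Mathlib

open Real

/-- Modified Bessel function of the first kind of (nonnegative integer) order `n`. -/
noncomputable def besselI (n : ℕ) (x : ℝ) : ℝ :=
  ∑' i : ℕ, (x / 2) ^ (2 * i + n) / ((Nat.factorial i : ℝ) * (Nat.factorial (i + n) : ℝ))

/-- The Euler characteristic density `ρ_j(λ, x)` of a noncentral `χ²₂(λ)` random field
(equation (14) of the paper):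
`ρ_j(λ,x) = e^{−(λ+x)/2}/(2π)^{j/2} · Σ_{i=0}^∞ λ^i x^{1+i−j/2}/(4^i i! Γ(1+i)) ·
  Σ_{l=0}^{⌊(j−1)/2⌋} Σ_{m=0}^{j−1−2l} 1_{2 ≥ j−m−2l−2i} C(1+2i, j−1−m−2l) ·
    (−1)^{j−1+m+l} (j−1)! x^{m+l}/(m! l! 2^l)`. -/
noncomputable def ecDensity (j : ℕ) (lam x : ℝ) : ℝ :=
  Real.exp (-(lam + x) / 2) / (2 * π) ^ ((j : ℝ) / 2) *
    ∑' i : ℕ,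
      lam ^ i * x ^ ((1 : ℝ) + i - j / 2) /
          (4 ^ i * (Nat.factorial i : ℝ) * Real.Gamma (1 + i)) *
        ∑ l ∈ Finset.range ((j - 1) / 2 + 1), ∑ m ∈ Finset.range (j - 1 - 2 * l + 1),
          (if (2 : ℤ) ≥ (j : ℤ) - m - 2 * l - 2 * i then 1 else 0) *
            (Nat.choose (1 + 2 * i) (j - 1 - m - 2 * l) : ℝ) *
            (-1) ^ (j - 1 + m + l) * (Nat.factorial (j - 1) : ℝ) * x ^ (m + l) /
            ((Nat.factorial m : ℝ) * (Nat.factorial l : ℝ) * 2 ^ l)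

/-! For `j = 1` the double sum in `ecDensity` collapses to its single term `l = m = 0`, which
equals `1`; with `Γ(1 + i) = i!` the series becomes `√x · Σ (λx/4)^i / (i!)²`, the power series of
`I₀(√(λx))`. -/

open Nat

theorem ecDensity_one_eq_tsum (lam x : ℝ) :
    ecDensity 1 lam x = exp (-(lam + x) / 2) / (2 * π) ^ (1 / 2 : ℝ) *
      ∑' i : ℕ, lam ^ i * x ^ ((1 : ℝ) + i - 1 / 2) / (4 ^ i * i ! * Gamma (1 + i)) := by
  simp only [ecDensity, Nat.cast_one, tsub_self, Nat.zero_div, zero_add, Finset.range_one,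
    Finset.sum_singleton, Nat.choose_zero_right, pow_zero, Nat.factorial_zero, CharP.cast_eq_zero,
    mul_one, div_one, zero_tsub, sub_zero, mul_zero]
  congr 2 with i
  rw [if_pos (by omega), mul_one]

theorem besselI_zero_sqrt {t : ℝ} (ht : 0 ≤ t) :
    besselI 0 (√t) = ∑' i : ℕ, (t / 4) ^ i / (i ! : ℝ) ^ 2 := by
  refine tsum_congr fun i => ?_
  rw [add_zero, add_zero, pow_mul, div_pow, sq_sqrt ht, ← sq]
  norm_num

theorem Real.Gamma_one_add_nat (n : ℕ) : Gamma (1 + n) = n ! := by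
  rw [add_comm, Gamma_nat_eq_factorial]

theorem Real.rpow_one_add_nat_sub_half {x : ℝ} (hx : 0 < x) (n : ℕ) :
    x ^ ((1 : ℝ) + n - 1 / 2) = √x * x ^ n := by
  rw [show (1 : ℝ) + n - 1 / 2 = 1 / 2 + n by ring, rpow_add hx, rpow_natCast, ← sqrt_eq_rpow]

/-- The order-1 EC density of the noncentral `χ²₂(λ)` field:
`ρ₁(λ, x) = e^{−(λ+x)/2}·√(x/(2π))·I₀(√(λx))`. -/
theorem ecDensity_one (lam x : ℝ) (hlam : 0 ≤ lam) (hx : 0 < x) :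
    ecDensity 1 lam x =
      Real.exp (-(lam + x) / 2) * Real.sqrt (x / (2 * π)) *
        besselI 0 (Real.sqrt (lam * x)) := by
  have hterm : ∀ i : ℕ, lam ^ i * x ^ ((1 : ℝ) + i - 1 / 2) / (4 ^ i * i ! * Gamma (1 + i)) =
      √x * ((lam * x / 4) ^ i / (i ! : ℝ) ^ 2) := fun i => by
    rw [rpow_one_add_nat_sub_half hx, Gamma_one_add_nat, div_pow, mul_pow]
    field_simp
  rw [ecDensity_one_eq_tsum, tsum_congr hterm, tsum_mul_left, besselI_zero_sqrt (by positivity),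
    sqrt_div hx.le, ← sqrt_eq_rpow]
  ring
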